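/- arXiv:2306.04084 — 2 statements merged into one kernel-verified Lean document; each statement's English description precedes it below -/
import Mathlib

section
/- Let p ≥ 1, let k_i, k_j > 0 be real numbers, and let C be a symmetric real p×p matrix with −k_j·C ≺ k_i·I. Define X* := (k_i k_j/(k_i+k_j)) · (I − C)₊. Then X* ⪰ O, −k_j·C ≺ X* ≺ k_i·I, and for every symmetric X with X ⪰ O and −k_j·C ≺ X ≺ k_i·I one has k_i·log det(I − X/k_i) + k_j·log det(C + X/k_j) ≤ k_i·log det(I − X*/k_i) + k_j·log det(C + X*/k_j). -/
/-!
Diagonalise `I - C = U diag(μ) Uᵀ`. Conjugation by the orthogonal matrix `U` preserves the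
constraints and the objective and turns `X*` into `diag(c · max(μᵢ, 0))` with
`c = kᵢkⱼ/(kᵢ+kⱼ)`, so we may assume `C = diag(1 - μ)`. Then Hadamard's inequality
`det A ≤ ∏ Aᵢᵢ` bounds the objective at `X` by a sum of scalar objectives evaluated at the
diagonal entries `Xᵢᵢ ≥ 0`, with equality for diagonal `X`; each scalar objective is concave,
and its maximum over `y ≥ 0` is attained at `c · max(μᵢ, 0)`.
-/

/-- The positive part `X₊` of a symmetric (Hermitian) real matrix `X`: with spectral
decomposition `X = U diag(λ₁,…,λ_p) Uᵀ`, it is `U diag(max(λ₁,0),…,max(λ_p,0)) Uᵀ`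
(junk value `0` if `X` is not Hermitian). -/
noncomputable def matPosPart {p : ℕ} (X : Matrix (Fin p) (Fin p) ℝ) :
    Matrix (Fin p) (Fin p) ℝ :=
  if hX : X.IsHermitian then
    (hX.eigenvectorUnitary : Matrix (Fin p) (Fin p) ℝ) *
      Matrix.diagonal (fun i => max (hX.eigenvalues i) 0) *
      (star hX.eigenvectorUnitary : Matrix (Fin p) (Fin p) ℝ)
  else 0

open Matrix Real

namespace Matrix

variable {n : Type*} [Fintype n] [DecidableEq n]

theorem PosSemidef.det_le_exp_trace_sub_card {A : Matrix n n ℝ} (hA : A.PosSemidef) :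
    A.det ≤ exp (A.trace - Fintype.card n) := by
  have hdet := hA.isHermitian.det_eq_prod_eigenvalues
  have htrace := hA.isHermitian.trace_eq_sum_eigenvalues
  simp only [RCLike.ofReal_real_eq_id, id] at hdet htrace
  rw [hdet, htrace]
  calc ∏ i, hA.isHermitian.eigenvalues i
      ≤ ∏ i, exp (hA.isHermitian.eigenvalues i - 1) :=
        Finset.prod_le_prod (fun i _ => hA.eigenvalues_nonneg i)
          fun i _ => by linarith [add_one_le_exp (hA.isHermitian.eigenvalues i - 1)]
    _ = exp (∑ i, hA.isHermitian.eigenvalues i - Fintype.card n) := by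
        simp [← exp_sum, Finset.sum_sub_distrib]

/-- Hadamard's inequality. -/
theorem PosDef.det_le_prod_diag {A : Matrix n n ℝ} (hA : A.PosDef) : A.det ≤ ∏ i, A i i := by
  set f : n → ℝ := fun i => (√(A i i))⁻¹
  have hf : ∀ i, f i * f i = (A i i)⁻¹ := fun i => by
    rw [← mul_inv, Real.mul_self_sqrt hA.diag_pos.le]
  have hprod : 0 < ∏ i, A i i := Finset.prod_pos fun i _ => hA.diag_pos
  -- `B = diag(f) A diag(f)` has unit diagonal, so `det B ≤ exp (trace B - card n) = 1`
  have hB : (diagonal f * A * diagonal f).PosSemidef := by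
    simpa using hA.posSemidef.mul_mul_conjTranspose_same (diagonal f)
  have htrace : (diagonal f * A * diagonal f).trace = Fintype.card n := by
    simp [trace, mul_comm (f _), mul_assoc, hf, hA.diag_pos.ne']
  have hdet : (diagonal f * A * diagonal f).det = A.det / ∏ i, A i i := by
    simp only [det_mul, det_diagonal]
    rw [mul_right_comm, ← Finset.prod_mul_distrib]
    simp [hf, Finset.prod_inv_distrib, div_eq_mul_inv, mul_comm]
  have := hB.det_le_exp_trace_sub_card
  rwa [htrace, sub_self, exp_zero, hdet, div_le_one hprod] at this

theorem PosDef.log_det_le_sum_log_diag {A : Matrix n n ℝ} (hA : A.PosDef) :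
    log A.det ≤ ∑ i, log (A i i) := by
  rw [← log_prod fun i _ => hA.diag_pos.ne']
  exact log_le_log hA.det_pos hA.det_le_prod_diag

theorem posDef_conjStarAlgAut_iff (u : unitary (Matrix n n ℝ)) {A : Matrix n n ℝ} :
    (Unitary.conjStarAlgAut ℝ _ u A).PosDef ↔ A.PosDef :=
  IsUnit.posDef_star_right_conjugate_iff Unitary.isUnit_coe

theorem posSemidef_conjStarAlgAut_iff (u : unitary (Matrix n n ℝ)) {A : Matrix n n ℝ} :
    (Unitary.conjStarAlgAut ℝ _ u A).PosSemidef ↔ A.PosSemidef :=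
  IsUnit.posSemidef_star_right_conjugate_iff Unitary.isUnit_coe

theorem det_conjStarAlgAut (u : unitary (Matrix n n ℝ)) (A : Matrix n n ℝ) :
    (Unitary.conjStarAlgAut ℝ _ u A).det = A.det :=
  det_conj_of_mul_eq_one (Unitary.coe_mul_star_self u) (Unitary.coe_star_mul_self u)

theorem IsHermitian.eq_conjStarAlgAut_diagonal_one_sub {C : Matrix n n ℝ}
    (hH : (1 - C).IsHermitian) :
    C = Unitary.conjStarAlgAut ℝ _ hH.eigenvectorUnitary (diagonal (1 - hH.eigenvalues)) := by
  have h1C := hH.spectral_theorem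
  simp only [RCLike.ofReal_real_eq_id, Function.id_comp] at h1C
  have hdiag (d : n → ℝ) : diagonal (1 - d) = 1 - diagonal d := by
    rw [← diagonal_one, diagonal_sub]; rfl
  rw [hdiag, map_sub, map_one, ← h1C, sub_sub_cancel]

end Matrix

theorem matPosPart_eq_conjStarAlgAut {p : ℕ} {X : Matrix (Fin p) (Fin p) ℝ}
    (hX : X.IsHermitian) :
    matPosPart X = Unitary.conjStarAlgAut ℝ _ hX.eigenvectorUnitary
      (diagonal fun i => max (hX.eigenvalues i) 0) := by
  rw [matPosPart, dif_pos hX, Unitary.conjStarAlgAut_apply]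

theorem Real.log_le_log_add_sub_div {a x : ℝ} (ha : 0 < a) (hx : 0 < x) :
    log x ≤ log a + (x - a) / a := by
  have := log_le_sub_one_of_pos (div_pos hx ha)
  rw [log_div hx.ne' ha.ne'] at this
  rw [sub_div, div_self ha.ne']
  linarith

section Scalar

variable (ki kj : ℝ)

/-- The objective on a `1 × 1` block, `μ` playing the role of an eigenvalue of `I - C`. -/
noncomputable def scalarObjective (μ y : ℝ) : ℝ :=
  ki * log (1 - ki⁻¹ * y) + kj * log (1 - μ + kj⁻¹ * y)

noncomputable def scalarMaximizer (μ : ℝ) : ℝ :=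
  ki * kj / (ki + kj) * max μ 0

variable {ki kj}

theorem scalarMaximizer_nonneg (hki : 0 < ki) (hkj : 0 < kj) (μ : ℝ) :
    0 ≤ scalarMaximizer ki kj μ := by
  unfold scalarMaximizer; positivity

theorem scalarMaximizer_lt (hki : 0 < ki) (hkj : 0 < kj) {μ : ℝ}
    (hμ : 0 < ki + kj * (1 - μ)) : scalarMaximizer ki kj μ < ki := by
  unfold scalarMaximizer
  rcases le_or_gt μ 0 with h | h
  · simpa [max_eq_right h]
  · rw [max_eq_left h.le, div_mul_eq_mul_div, div_lt_iff₀ (by positivity)]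
    nlinarith

theorem scalarMaximizer_add_pos (hki : 0 < ki) (hkj : 0 < kj) {μ : ℝ}
    (hμ : 0 < ki + kj * (1 - μ)) : 0 < scalarMaximizer ki kj μ + kj * (1 - μ) := by
  unfold scalarMaximizer
  rcases le_or_gt μ 0 with h | h
  · rw [max_eq_right h]; nlinarith
  · have : ki * kj / (ki + kj) * μ + kj * (1 - μ) = kj * (ki + kj * (1 - μ)) / (ki + kj) := by
      field_simp; ring
    rw [max_eq_left h.le, this]; positivity

theorem scalarObjective_le_scalarMaximizer (hki : 0 < ki) (hkj : 0 < kj) {μ y : ℝ}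
    (hμ : 0 < ki + kj * (1 - μ)) (hy : 0 ≤ y) (h₁ : 0 < 1 - ki⁻¹ * y)
    (h₂ : 0 < 1 - μ + kj⁻¹ * y) :
    scalarObjective ki kj μ y ≤ scalarObjective ki kj μ (scalarMaximizer ki kj μ) := by
  set y₀ := scalarMaximizer ki kj μ
  set a := 1 - ki⁻¹ * y₀
  set b := 1 - μ + kj⁻¹ * y₀
  have ha : 0 < a := by
    have := scalarMaximizer_lt hki hkj hμ
    simp only [a]; rw [sub_pos, inv_mul_lt_iff₀ hki]; linarith
  have hb : 0 < b := by
    have := scalarMaximizer_add_pos hki hkj hμ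
    have : b = kj⁻¹ * (y₀ + kj * (1 - μ)) := by simp only [b]; field_simp; ring
    rw [this]; positivity
  have tangent : scalarObjective ki kj μ y ≤
      scalarObjective ki kj μ y₀ + (y - y₀) * (b⁻¹ - a⁻¹) := by
    have l₁ := log_le_log_add_sub_div ha h₁
    have l₂ := log_le_log_add_sub_div hb h₂
    have e₁ : ki * ((1 - ki⁻¹ * y - a) / a) = -(y - y₀) * a⁻¹ := by
      simp only [a]; field_simp; ring
    have e₂ : kj * ((1 - μ + kj⁻¹ * y - b) / b) = (y - y₀) * b⁻¹ := by
      simp only [b]; field_simp; ring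
    unfold scalarObjective
    nlinarith [mul_le_mul_of_nonneg_left l₁ hki.le, mul_le_mul_of_nonneg_left l₂ hkj.le]
  have stationary : (y - y₀) * (b⁻¹ - a⁻¹) ≤ 0 := by
    rcases le_or_gt μ 0 with h | h
    · have hy₀ : y₀ = 0 := by simp [y₀, scalarMaximizer, max_eq_right h]
      have : b⁻¹ ≤ a⁻¹ := by
        simp only [a, b, hy₀, mul_zero, sub_zero, add_zero, inv_one]
        exact inv_le_one_of_one_le₀ (by linarith)
      rw [hy₀, sub_zero]; exact mul_nonpos_of_nonneg_of_nonpos hy (by linarith)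
    · have : a = b := by
        simp only [a, b, y₀, scalarMaximizer, max_eq_left h.le]
        field_simp; ring
      rw [this, sub_self, mul_zero]
  linarith

end Scalar

section Feasible

variable {n : Type*} [DecidableEq n] (ki kj : ℝ)

def IsFeasible (C X : Matrix n n ℝ) : Prop :=
  X.PosSemidef ∧ (X + kj • C).PosDef ∧ (ki • 1 - X).PosDef

variable {ki kj}

theorem IsFeasible.posDef_one_sub_smul {C X : Matrix n n ℝ} (hki : 0 < ki)
    (h : IsFeasible ki kj C X) : (1 - ki⁻¹ • X).PosDef := by
  have := h.2.2.smul (inv_pos.mpr hki)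
  rwa [smul_sub, smul_smul, inv_mul_cancel₀ hki.ne', one_smul] at this

theorem IsFeasible.posDef_add_smul {C X : Matrix n n ℝ} (hkj : 0 < kj)
    (h : IsFeasible ki kj C X) : (C + kj⁻¹ • X).PosDef := by
  have := h.2.1.smul (inv_pos.mpr hkj)
  rwa [smul_add, smul_smul, inv_mul_cancel₀ hkj.ne', one_smul, add_comm] at this

theorem IsFeasible.diag_bounds (hki : 0 < ki) (hkj : 0 < kj) {μ : n → ℝ} {X : Matrix n n ℝ}
    (h : IsFeasible ki kj (diagonal (1 - μ)) X) (i : n) :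
    0 ≤ X i i ∧ 0 < 1 - ki⁻¹ * X i i ∧ 0 < 1 - μ i + kj⁻¹ * X i i := by
  have h₁ := (h.posDef_one_sub_smul hki).diag_pos (i := i)
  have h₂ := (h.posDef_add_smul hkj).diag_pos (i := i)
  simp only [Matrix.sub_apply, Matrix.add_apply, Matrix.smul_apply, one_apply_eq,
    diagonal_apply_eq, Pi.sub_apply, Pi.one_apply, smul_eq_mul] at h₁ h₂
  exact ⟨h.1.diag_nonneg, h₁, h₂⟩

theorem isFeasible_diagonal_scalarMaximizer (hki : 0 < ki) (hkj : 0 < kj) {μ : n → ℝ}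
    (hμ : ∀ i, 0 < ki + kj * (1 - μ i)) :
    IsFeasible ki kj (diagonal (1 - μ)) (diagonal (scalarMaximizer ki kj ∘ μ)) := by
  refine ⟨?_, ?_, ?_⟩
  · exact posSemidef_diagonal_iff.mpr fun i => scalarMaximizer_nonneg hki hkj (μ i)
  · rw [← diagonal_smul, diagonal_add, posDef_diagonal_iff]
    exact fun i => scalarMaximizer_add_pos hki hkj (hμ i)
  · rw [← diagonal_one, ← diagonal_smul, diagonal_sub, posDef_diagonal_iff]
    exact fun i => by simpa using scalarMaximizer_lt hki hkj (hμ i)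

end Feasible

section Objective

variable {n : Type*} [Fintype n] [DecidableEq n]

noncomputable def logDetObjective (ki kj : ℝ) (C X : Matrix n n ℝ) : ℝ :=
  ki * log (1 - ki⁻¹ • X).det + kj * log (C + kj⁻¹ • X).det

variable {ki kj : ℝ}

theorem isFeasible_conjStarAlgAut_iff (u : unitary (Matrix n n ℝ)) {C X : Matrix n n ℝ} :
    IsFeasible ki kj (Unitary.conjStarAlgAut ℝ _ u C) (Unitary.conjStarAlgAut ℝ _ u X) ↔
      IsFeasible ki kj C X := by
  conv_lhs => rw [IsFeasible, ← map_one (Unitary.conjStarAlgAut ℝ (Matrix n n ℝ) u)]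
  simp only [← map_smul, ← map_add, ← map_sub, posDef_conjStarAlgAut_iff,
    posSemidef_conjStarAlgAut_iff, IsFeasible]

theorem logDetObjective_conjStarAlgAut (u : unitary (Matrix n n ℝ)) (C X : Matrix n n ℝ) :
    logDetObjective ki kj (Unitary.conjStarAlgAut ℝ _ u C) (Unitary.conjStarAlgAut ℝ _ u X) =
      logDetObjective ki kj C X := by
  conv_lhs => rw [logDetObjective, ← map_one (Unitary.conjStarAlgAut ℝ (Matrix n n ℝ) u)]
  simp only [← map_smul, ← map_add, ← map_sub, det_conjStarAlgAut, logDetObjective]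

theorem logDetObjective_le_sum_scalarObjective (hki : 0 < ki) (hkj : 0 < kj) {μ : n → ℝ}
    {X : Matrix n n ℝ} (h : IsFeasible ki kj (diagonal (1 - μ)) X) :
    logDetObjective ki kj (diagonal (1 - μ)) X ≤ ∑ i, scalarObjective ki kj (μ i) (X i i) := by
  have h₁ := (h.posDef_one_sub_smul hki).log_det_le_sum_log_diag
  have h₂ := (h.posDef_add_smul hkj).log_det_le_sum_log_diag
  simp only [Matrix.sub_apply, Matrix.add_apply, Matrix.smul_apply, one_apply_eq,
    diagonal_apply_eq, Pi.sub_apply, Pi.one_apply, smul_eq_mul] at h₁ h₂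
  rw [logDetObjective]
  simp only [scalarObjective, Finset.sum_add_distrib, ← Finset.mul_sum]
  gcongr

theorem logDetObjective_diagonal (hki : 0 < ki) (hkj : 0 < kj) {μ y : n → ℝ}
    (h : IsFeasible ki kj (diagonal (1 - μ)) (diagonal y)) :
    logDetObjective ki kj (diagonal (1 - μ)) (diagonal y) =
      ∑ i, scalarObjective ki kj (μ i) (y i) := by
  have hb := h.diag_bounds hki hkj
  simp only [diagonal_apply_eq] at hb
  rw [logDetObjective, ← diagonal_one, ← diagonal_smul, diagonal_sub, ← diagonal_smul,
    diagonal_add, det_diagonal, det_diagonal]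
  simp only [Pi.smul_apply, Pi.sub_apply, Pi.one_apply, smul_eq_mul]
  rw [log_prod fun i _ => (hb i).2.1.ne', log_prod fun i _ => (hb i).2.2.ne']
  simp [scalarObjective, Finset.sum_add_distrib, Finset.mul_sum]

theorem logDetObjective_le_of_diagonal (hki : 0 < ki) (hkj : 0 < kj) {μ : n → ℝ}
    (hμ : ∀ i, 0 < ki + kj * (1 - μ i)) {X : Matrix n n ℝ}
    (h : IsFeasible ki kj (diagonal (1 - μ)) X) :
    logDetObjective ki kj (diagonal (1 - μ)) X ≤
      logDetObjective ki kj (diagonal (1 - μ)) (diagonal (scalarMaximizer ki kj ∘ μ)) := by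
  rw [logDetObjective_diagonal hki hkj (isFeasible_diagonal_scalarMaximizer hki hkj hμ)]
  refine (logDetObjective_le_sum_scalarObjective hki hkj h).trans
    (Finset.sum_le_sum fun i _ => ?_)
  obtain ⟨hy, h₁, h₂⟩ := h.diag_bounds hki hkj i
  exact scalarObjective_le_scalarMaximizer hki hkj (hμ i) hy h₁ h₂

end Objective

theorem stmt2_general {p : ℕ} (ki kj : ℝ) (hki : 0 < ki) (hkj : 0 < kj)
    (C : Matrix (Fin p) (Fin p) ℝ) (hCs : C.IsSymm)
    (hfeas : (ki • (1 : Matrix (Fin p) (Fin p) ℝ) + kj • C).PosDef)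
    (Xstar : Matrix (Fin p) (Fin p) ℝ)
    (hXstar : Xstar = (ki * kj / (ki + kj)) • matPosPart (1 - C)) :
    Xstar.PosSemidef ∧ (Xstar + kj • C).PosDef ∧
    (ki • (1 : Matrix (Fin p) (Fin p) ℝ) - Xstar).PosDef ∧
    ∀ X : Matrix (Fin p) (Fin p) ℝ, X.IsSymm → X.PosSemidef → (X + kj • C).PosDef →
      (ki • (1 : Matrix (Fin p) (Fin p) ℝ) - X).PosDef →
      ki * Real.log (1 - ki⁻¹ • X).det + kj * Real.log (C + kj⁻¹ • X).det ≤
        ki * Real.log (1 - ki⁻¹ • Xstar).det + kj * Real.log (C + kj⁻¹ • Xstar).det := by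
  have hH : (1 - C).IsHermitian := isHermitian_one.sub (isHermitian_iff_isSymm.mpr hCs)
  set μ := hH.eigenvalues
  set φ := Unitary.conjStarAlgAut ℝ (Matrix (Fin p) (Fin p) ℝ) hH.eigenvectorUnitary
  have hC : C = φ (diagonal (1 - μ)) := hH.eq_conjStarAlgAut_diagonal_one_sub
  have hX₀ : Xstar = φ (diagonal (scalarMaximizer ki kj ∘ μ)) := by
    rw [hXstar, matPosPart_eq_conjStarAlgAut hH, ← map_smul, ← diagonal_smul]
    rfl
  have hμ : ∀ i, 0 < ki + kj * (1 - μ i) := by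
    rw [hC, ← map_one φ, ← map_smul, ← map_smul, ← map_add, posDef_conjStarAlgAut_iff,
      ← diagonal_one, ← diagonal_smul, ← diagonal_smul, diagonal_add, posDef_diagonal_iff] at hfeas
    simpa using hfeas
  have hopt := isFeasible_diagonal_scalarMaximizer hki hkj hμ
  rw [← isFeasible_conjStarAlgAut_iff hH.eigenvectorUnitary, ← hC, ← hX₀] at hopt
  refine ⟨hopt.1, hopt.2.1, hopt.2.2, fun X _ hXpsd hXlow hXup => ?_⟩
  obtain ⟨Y, rfl⟩ : ∃ Y, X = φ Y := ⟨φ.symm X, (φ.apply_symm_apply X).symm⟩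
  have hY : IsFeasible ki kj (diagonal (1 - μ)) Y := by
    rw [← isFeasible_conjStarAlgAut_iff hH.eigenvectorUnitary, ← hC]
    exact ⟨hXpsd, hXlow, hXup⟩
  show logDetObjective ki kj C (φ Y) ≤ logDetObjective ki kj C Xstar
  calc logDetObjective ki kj C (φ Y)
      = logDetObjective ki kj (diagonal (1 - μ)) Y := by
        rw [hC, logDetObjective_conjStarAlgAut]
    _ ≤ logDetObjective ki kj (diagonal (1 - μ)) (diagonal (scalarMaximizer ki kj ∘ μ)) :=
        logDetObjective_le_of_diagonal hki hkj hμ hY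
    _ = logDetObjective ki kj C Xstar := by
        rw [hC, hX₀, logDetObjective_conjStarAlgAut]

/-- `X* := (kᵢkⱼ/(kᵢ+kⱼ)) (I − C)₊` satisfies `X* ⪰ O`,
`−kⱼC ≺ X* ≺ kᵢI`, and maximizes `kᵢ log det(I − X/kᵢ) + kⱼ log det(C + X/kⱼ)` over all
symmetric `X` with `X ⪰ O` and `−kⱼC ≺ X ≺ kᵢI`. -/
theorem stmt2 {p : ℕ} (hp : 1 ≤ p) (ki kj : ℝ) (hki : 0 < ki) (hkj : 0 < kj)
    (C : Matrix (Fin p) (Fin p) ℝ) (hCs : C.IsSymm)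
    (hfeas : (ki • (1 : Matrix (Fin p) (Fin p) ℝ) + kj • C).PosDef)
    (Xstar : Matrix (Fin p) (Fin p) ℝ)
    (hXstar : Xstar = (ki * kj / (ki + kj)) • matPosPart (1 - C)) :
    Xstar.PosSemidef ∧ (Xstar + kj • C).PosDef ∧
    (ki • (1 : Matrix (Fin p) (Fin p) ℝ) - Xstar).PosDef ∧
    ∀ X : Matrix (Fin p) (Fin p) ℝ, X.IsSymm → X.PosSemidef → (X + kj • C).PosDef →
      (ki • (1 : Matrix (Fin p) (Fin p) ℝ) - X).PosDef →
      ki * Real.log (1 - ki⁻¹ • X).det + kj * Real.log (C + kj⁻¹ • X).det ≤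
        ki * Real.log (1 - ki⁻¹ • Xstar).det + kj * Real.log (C + kj⁻¹ • Xstar).det :=
  stmt2_general ki kj hki hkj C hCs hfeas Xstar hXstar
end

section
/- Let p ≥ 1, let k_i, k_j > 0 be real numbers, and let C be a symmetric real p×p matrix with −k_j·C ≺ k_i·I. Define X* := (k_i k_j/(k_i+k_j)) · (I − C)₊. Then I − X*/k_i ≻ O and C + X*/k_j ≻ O, the matrix G := −(I − X*/k_i)^{−1} + (C + X*/k_j)^{−1} satisfies G ⪯ O, and trace(G · X*) = 0. -/
open Matrix MatrixOrder ComplexOrder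

noncomputable def scalarXStar (ki kj c : ℝ) : ℝ := ki * kj / (ki + kj) * max (1 - c) 0

@[fun_prop]
lemma continuous_scalarXStar (ki kj : ℝ) : Continuous (scalarXStar ki kj) := by
  unfold scalarXStar
  fun_prop

section Scalar

variable {ki kj c : ℝ}

lemma scalarXStar_of_one_le (hc : 1 ≤ c) : scalarXStar ki kj c = 0 := by
  rw [scalarXStar, max_eq_right (by linarith), mul_zero]

lemma scalarXStar_kkt (hki : 0 < ki) (hkj : 0 < kj) (hc : 0 < ki + kj * c) :
    0 < 1 - ki⁻¹ * scalarXStar ki kj c ∧ 0 < c + kj⁻¹ * scalarXStar ki kj c ∧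
      (c + kj⁻¹ * scalarXStar ki kj c)⁻¹ ≤ (1 - ki⁻¹ * scalarXStar ki kj c)⁻¹ ∧
      (-(1 - ki⁻¹ * scalarXStar ki kj c)⁻¹ + (c + kj⁻¹ * scalarXStar ki kj c)⁻¹) *
        scalarXStar ki kj c = 0 := by
  rcases lt_or_ge c 1 with hc1 | hc1
  · have hmax : max (1 - c) 0 = 1 - c := max_eq_left (by linarith)
    have hsum : 0 < ki + kj := by linarith
    have ha : 1 - ki⁻¹ * scalarXStar ki kj c = (ki + kj * c) / (ki + kj) := by
      rw [scalarXStar, hmax]; field_simp; ring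
    have hb : c + kj⁻¹ * scalarXStar ki kj c = (ki + kj * c) / (ki + kj) := by
      rw [scalarXStar, hmax]; field_simp; ring
    have hpos : 0 < (ki + kj * c) / (ki + kj) := div_pos hc hsum
    rw [ha, hb]
    exact ⟨hpos, hpos, le_rfl, by ring⟩
  · rw [scalarXStar_of_one_le hc1]
    simp only [mul_zero, sub_zero, add_zero, inv_one]
    exact ⟨one_pos, by linarith, inv_le_one_of_one_le₀ hc1, trivial⟩

end Scalar

namespace Matrix

variable {n 𝕜 : Type*} [Fintype n] [DecidableEq n] [RCLike 𝕜] {A : Matrix n n 𝕜}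

lemma continuousOn_spectrum (f : ℝ → ℝ) : ContinuousOn f (spectrum ℝ A) :=
  A.finite_real_spectrum.continuousOn f

lemma posDef_cfc_iff (hA : A.IsHermitian) (f : ℝ → ℝ) :
    (cfc f A).PosDef ↔ ∀ x ∈ spectrum ℝ A, 0 < f x := by
  rw [← isStrictlyPositive_iff_posDef,
    cfc_isStrictlyPositive_iff f A (continuousOn_spectrum f) hA.isSelfAdjoint]

lemma posSemidef_cfc_iff (hA : A.IsHermitian) (f : ℝ → ℝ) :
    (cfc f A).PosSemidef ↔ ∀ x ∈ spectrum ℝ A, 0 ≤ f x := by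
  rw [← nonneg_iff_posSemidef, cfc_nonneg_iff f A (continuousOn_spectrum f) hA.isSelfAdjoint]

lemma inv_cfc (hA : A.IsHermitian) {f : ℝ → ℝ} (hf : ∀ x ∈ spectrum ℝ A, f x ≠ 0) :
    (cfc f A)⁻¹ = cfc (fun x => (f x)⁻¹) A := by
  rw [nonsing_inv_eq_ringInverse, cfc_inv f A hf (continuousOn_spectrum f) hA.isSelfAdjoint]

lemma posDef_smul_one_add_smul_iff (hA : A.IsHermitian) (a b : ℝ) :
    (a • (1 : Matrix n n 𝕜) + b • A).PosDef ↔ ∀ x ∈ spectrum ℝ A, 0 < a + b * x := by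
  rw [← posDef_cfc_iff hA, cfc_const_add .., cfc_const_mul_id .., Algebra.algebraMap_eq_smul_one]

end Matrix

lemma matPosPart_eq_cfc {p : ℕ} {X : Matrix (Fin p) (Fin p) ℝ} (hX : X.IsHermitian) :
    matPosPart X = cfc (fun x : ℝ => max x 0) X := by
  rw [matPosPart, dif_pos hX, hX.cfc_eq, IsHermitian.cfc, Unitary.conjStarAlgAut_apply]
  rfl

lemma smul_matPosPart_one_sub_eq_cfc {p : ℕ} (ki kj : ℝ) {C : Matrix (Fin p) (Fin p) ℝ}
    (hC : C.IsHermitian) :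
    (ki * kj / (ki + kj)) • matPosPart (1 - C) = cfc (scalarXStar ki kj) C := by
  have hsub : 1 - C = cfc (fun c : ℝ => 1 - c) C := by
    rw [cfc_sub .., cfc_const_one .., cfc_id' ..]
  rw [matPosPart_eq_cfc (isHermitian_one.sub hC), hsub, ← cfc_comp' .., ← cfc_const_mul ..]
  rfl

theorem stmt4_general {p : ℕ} (ki kj : ℝ) (hki : 0 < ki) (hkj : 0 < kj)
    (C : Matrix (Fin p) (Fin p) ℝ) (hCs : C.IsSymm)
    (hfeas : (ki • (1 : Matrix (Fin p) (Fin p) ℝ) + kj • C).PosDef)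
    (Xstar : Matrix (Fin p) (Fin p) ℝ)
    (hXstar : Xstar = (ki * kj / (ki + kj)) • matPosPart (1 - C))
    (G : Matrix (Fin p) (Fin p) ℝ)
    (hG : G = -(1 - ki⁻¹ • Xstar)⁻¹ + (C + kj⁻¹ • Xstar)⁻¹) :
    (1 - ki⁻¹ • Xstar).PosDef ∧ (C + kj⁻¹ • Xstar).PosDef ∧
      (-G).PosSemidef ∧ (G * Xstar).trace = 0 := by
  have hC : C.IsHermitian := by rwa [IsHermitian, conjTranspose_eq_transpose_of_trivial]
  have hX : Xstar = cfc (scalarXStar ki kj) C :=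
    hXstar.trans (smul_matPosPart_one_sub_eq_cfc ki kj hC)
  have hkkt c (hc : c ∈ spectrum ℝ C) :=
    scalarXStar_kkt hki hkj ((posDef_smul_one_add_smul_iff hC ki kj).mp hfeas c hc)
  have h1 : 1 - ki⁻¹ • Xstar = cfc (fun c => 1 - ki⁻¹ * scalarXStar ki kj c) C := by
    rw [hX, cfc_sub .., cfc_const_mul .., cfc_const_one ..]
  have h2 : C + kj⁻¹ • Xstar = cfc (fun c => c + kj⁻¹ * scalarXStar ki kj c) C := by
    rw [hX, cfc_add .., cfc_const_mul .., cfc_id' ..]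
  have hG' : G = cfc (fun c => -(1 - ki⁻¹ * scalarXStar ki kj c)⁻¹ +
      (c + kj⁻¹ * scalarXStar ki kj c)⁻¹) C := by
    rw [hG, h1, h2, inv_cfc hC (fun c hc => (hkkt c hc).1.ne'),
      inv_cfc hC (fun c hc => (hkkt c hc).2.1.ne'), ← cfc_neg,
      ← cfc_add C _ _ (continuousOn_spectrum _) (continuousOn_spectrum _)]
  refine ⟨?_, ?_, ?_, ?_⟩
  · rw [h1, posDef_cfc_iff hC]
    exact fun c hc => (hkkt c hc).1
  · rw [h2, posDef_cfc_iff hC]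
    exact fun c hc => (hkkt c hc).2.1
  · rw [hG', ← cfc_neg, posSemidef_cfc_iff hC]
    exact fun c hc => by linarith [(hkkt c hc).2.2.1]
  · rw [hG', hX, ← cfc_mul _ _ C (continuousOn_spectrum _) (continuousOn_spectrum _),
      cfc_congr (fun c hc => (hkkt c hc).2.2.2), cfc_const_zero, trace_zero]

/-- With `X* := (kᵢkⱼ/(kᵢ+kⱼ)) (I − C)₊`, we have `I − X*/kᵢ ≻ O`,
`C + X*/kⱼ ≻ O`, the gradient `G := −(I − X*/kᵢ)⁻¹ + (C + X*/kⱼ)⁻¹` satisfies `G ⪯ O`,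
and `trace(G X*) = 0`. -/
theorem stmt4 {p : ℕ} (hp : 1 ≤ p) (ki kj : ℝ) (hki : 0 < ki) (hkj : 0 < kj)
    (C : Matrix (Fin p) (Fin p) ℝ) (hCs : C.IsSymm)
    (hfeas : (ki • (1 : Matrix (Fin p) (Fin p) ℝ) + kj • C).PosDef)
    (Xstar : Matrix (Fin p) (Fin p) ℝ)
    (hXstar : Xstar = (ki * kj / (ki + kj)) • matPosPart (1 - C))
    (G : Matrix (Fin p) (Fin p) ℝ)
    (hG : G = -(1 - ki⁻¹ • Xstar)⁻¹ + (C + kj⁻¹ • Xstar)⁻¹) :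
    (1 - ki⁻¹ • Xstar).PosDef ∧ (C + kj⁻¹ • Xstar).PosDef ∧
      (-G).PosSemidef ∧ (G * Xstar).trace = 0 :=
  stmt4_general ki kj hki hkj C hCs hfeas Xstar hXstar G hG
end
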